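/- Let S = <a, a+d, ..., a+wd> with gcd(a,d)=1 and 0 < w < a, and for 1 < r < w−1 let S_r be S with the generator a+rd omitted. Then for every n ∈ S_r, L_{S_r}(n) = L_S(n); in particular, with n = c1·a + c2·d, 0 ≤ c2 < a, L_S(n) = {c1 − kd : 0 ≤ k ≤ (c1·w − c2)/(a + wd)}. -/
import Mathlib


/-- Membership in the numerical monoid generated by `a + i*d` for `0 ≤ i ≤ w`
with the generators indexed by `G` omitted (`G = ∅` gives the full arithmetical monoid). -/
def AMem (a d w : ℕ) (G : Set ℕ) (n : ℤ) : Prop :=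
  ∃ z : Fin (w + 1) → ℕ, (∀ i : Fin (w + 1), (i : ℕ) ∈ G → z i = 0) ∧
    n = ∑ i : Fin (w + 1), (z i : ℤ) * ((a : ℤ) + ((i : ℕ) : ℤ) * (d : ℤ))

/-- The set of factorization lengths of `n` over the generators `a + i*d`, `0 ≤ i ≤ w`,
with the generators indexed by `G` omitted. -/
def ALen (a d w : ℕ) (G : Set ℕ) (n : ℤ) : Set ℤ :=
  {ℓ | ∃ z : Fin (w + 1) → ℕ, (∀ i : Fin (w + 1), (i : ℕ) ∈ G → z i = 0) ∧
    n = ∑ i : Fin (w + 1), (z i : ℤ) * ((a : ℤ) + ((i : ℕ) : ℤ) * (d : ℤ)) ∧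
    (∑ i : Fin (w + 1), (z i : ℤ)) = ℓ}

/-- The set of length sets. -/
def ALenSets (a d w : ℕ) (G : Set ℕ) : Set (Set ℤ) :=
  {L | ∃ n : ℤ, AMem a d w G n ∧ L = ALen a d w G n}

section Aux

lemma sum_if (w j c : ℕ) (hj : j < w + 1) :
    (∑ i : Fin (w+1), if (i:ℕ) = j then c else 0) = c := by
  have : ∀ i : Fin (w+1), (if (i:ℕ) = j then c else 0) = (if i = (⟨j, hj⟩ : Fin (w+1)) then c else 0) := by
    intro i; simp [Fin.ext_iff]
  simp only [this]
  rw [Finset.sum_ite_eq' Finset.univ (⟨j, hj⟩ : Fin (w+1)) (fun _ => c)]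
  simp

lemma sum_if_mul (w j c : ℕ) (hj : j < w + 1) :
    (∑ i : Fin (w+1), (i:ℕ) * (if (i:ℕ) = j then c else 0)) = j * c := by
  have : ∀ i : Fin (w+1), (i:ℕ) * (if (i:ℕ) = j then c else 0)
      = (if i = (⟨j, hj⟩ : Fin (w+1)) then j * c else 0) := by
    intro i
    by_cases h : (i:ℕ) = j
    · simp [h, Fin.ext_iff]
    · simp [h, Fin.ext_iff]
  simp only [this]
  rw [Finset.sum_ite_eq' Finset.univ (⟨j, hj⟩ : Fin (w+1)) (fun _ => j * c)]
  simp

lemma sum_fact (a d w : ℕ) (z : Fin (w+1) → ℕ) :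
    ∑ i : Fin (w+1), (z i : ℤ) * ((a:ℤ) + ((i:ℕ):ℤ) * (d:ℤ))
      = ((∑ i : Fin (w+1), z i : ℕ) : ℤ) * a + ((∑ i : Fin (w+1), (i:ℕ) * z i : ℕ) : ℤ) * d := by
  push_cast
  rw [Finset.sum_mul, Finset.sum_mul, ← Finset.sum_add_distrib]
  apply Finset.sum_congr rfl
  intro i _
  ring

lemma sum_le_w (w : ℕ) (z : Fin (w+1) → ℕ) :
    (∑ i : Fin (w+1), (i:ℕ) * z i) ≤ (∑ i : Fin (w+1), z i) * w := by
  rw [Finset.sum_mul]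
  apply Finset.sum_le_sum
  intro i _
  exact Nat.mul_le_mul_right (z i) (Nat.lt_succ_iff.mp i.isLt) |>.trans_eq (Nat.mul_comm _ _)

lemma construct (w r L M : ℕ) (hw0 : 0 < w) (hr1 : 1 < r) (hr2 : r < w - 1)
    (hM : M ≤ L * w) (hLM : ¬ (L = 1 ∧ M = r)) :
    ∃ z : Fin (w+1) → ℕ, (∀ i : Fin (w+1), (i:ℕ) = r → z i = 0) ∧
      (∑ i : Fin (w+1), z i) = L ∧ (∑ i : Fin (w+1), (i:ℕ) * z i) = M := by
  have hw4 : 4 ≤ w := by omega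
  have hrw : r + 1 < w := by omega
  set q := M / w with hq
  set s := M % w with hsdef
  have hdm : w * q + s = M := Nat.div_add_mod M w
  have hs : s < w := Nat.mod_lt _ hw0
  clear_value q s
  have hqL : q ≤ L := by
    have h1 : w * q ≤ w * L := by
      calc w * q ≤ M := by omega
      _ ≤ L * w := hM
      _ = w * L := Nat.mul_comm _ _
    exact Nat.le_of_mul_le_mul_left h1 hw0
  have hqL' : s ≠ 0 → q < L := by
    intro hs0
    have h1 : w * q < w * L := by
      calc w * q < M := by omega
      _ ≤ L * w := hM
      _ = w * L := Nat.mul_comm _ _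
    exact Nat.lt_of_mul_lt_mul_left h1
  by_cases hs0 : s = 0
  · refine ⟨fun i => (if (i:ℕ) = w then q else 0) + (if (i:ℕ) = 0 then L - q else 0), ?_, ?_, ?_⟩
    · intro i hi; simp only [hi]; simp only [if_neg (by omega : r ≠ w), if_neg (by omega : r ≠ 0)]
    · rw [Finset.sum_add_distrib, sum_if w w q (by omega), sum_if w 0 (L-q) (by omega)]; omega
    · simp only [Nat.mul_add]
      rw [Finset.sum_add_distrib, sum_if_mul w w q (by omega), sum_if_mul w 0 (L-q) (by omega)]
      omega
  · by_cases hsr : s = r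
    · by_cases hq2 : q + 2 ≤ L
      · refine ⟨fun i => (if (i:ℕ) = w then q else 0) + (if (i:ℕ) = r - 1 then 1 else 0)
          + (if (i:ℕ) = 1 then 1 else 0) + (if (i:ℕ) = 0 then L - q - 2 else 0), ?_, ?_, ?_⟩
        · intro i hi; simp only [hi]
          simp only [if_neg (by omega : r ≠ w), if_neg (by omega : r ≠ r - 1),
            if_neg (by omega : r ≠ 1), if_neg (by omega : r ≠ 0)]
        · rw [Finset.sum_add_distrib, Finset.sum_add_distrib, Finset.sum_add_distrib,
            sum_if w w q (by omega), sum_if w (r-1) 1 (by omega), sum_if w 1 1 (by omega),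
            sum_if w 0 (L-q-2) (by omega)]
          omega
        · simp only [Nat.mul_add]
          rw [Finset.sum_add_distrib, Finset.sum_add_distrib, Finset.sum_add_distrib,
            sum_if_mul w w q (by omega), sum_if_mul w (r-1) 1 (by omega),
            sum_if_mul w 1 1 (by omega), sum_if_mul w 0 (L-q-2) (by omega)]
          omega
      · have hqLlt : q < L := hqL' (by omega)
        have hL2 : 2 ≤ L := by
          by_contra h
          push_neg at h
          have hL1 : L = 1 := by omega
          have hq0 : q = 0 := by omega
          rw [hq0, Nat.mul_zero] at hdm
          exact hLM ⟨hL1, by omega⟩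
        obtain ⟨p, hp⟩ : ∃ p, q = p + 1 := ⟨q - 1, by omega⟩
        have hmul : w * q = w * p + w := by rw [hp, Nat.mul_succ]
        refine ⟨fun i => (if (i:ℕ) = w then p else 0) + (if (i:ℕ) = w - 1 then 1 else 0)
          + (if (i:ℕ) = r + 1 then 1 else 0), ?_, ?_, ?_⟩
        · intro i hi; simp only [hi]
          simp only [if_neg (by omega : r ≠ w), if_neg (by omega : r ≠ w - 1),
            if_neg (by omega : r ≠ r + 1)]
        · rw [Finset.sum_add_distrib, Finset.sum_add_distrib,
            sum_if w w p (by omega), sum_if w (w-1) 1 (by omega),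
            sum_if w (r+1) 1 (by omega)]
          omega
        · simp only [Nat.mul_add]
          rw [Finset.sum_add_distrib, Finset.sum_add_distrib,
            sum_if_mul w w p (by omega), sum_if_mul w (w-1) 1 (by omega),
            sum_if_mul w (r+1) 1 (by omega)]
          omega
    · have hqLlt : q < L := hqL' hs0
      refine ⟨fun i => (if (i:ℕ) = w then q else 0) + (if (i:ℕ) = s then 1 else 0)
        + (if (i:ℕ) = 0 then L - q - 1 else 0), ?_, ?_, ?_⟩
      · intro i hi; simp only [hi]
        simp only [if_neg (by omega : r ≠ w), if_neg (fun h => hsr h.symm : r ≠ s),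
          if_neg (by omega : r ≠ 0)]
      · rw [Finset.sum_add_distrib, Finset.sum_add_distrib,
          sum_if w w q (by omega), sum_if w s 1 (by omega), sum_if w 0 (L-q-1) (by omega)]
        omega
      · simp only [Nat.mul_add]
        rw [Finset.sum_add_distrib, Finset.sum_add_distrib,
          sum_if_mul w w q (by omega), sum_if_mul w s 1 (by omega),
          sum_if_mul w 0 (L-q-1) (by omega)]
        omega

lemma dpos (a d w : ℕ) (hgcd : Nat.gcd a d = 1) (hw0 : 0 < w) (hwa : w < a) : 0 < d := by
  rcases Nat.eq_zero_or_pos d with h | h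
  · subst h; rw [Nat.gcd_zero_right] at hgcd; omega
  · exact h

lemma coprime_int (a d : ℕ) (hgcd : Nat.gcd a d = 1) : IsCoprime (a:ℤ) (d:ℤ) := by
  rw [Int.isCoprime_iff_gcd_eq_one, Int.gcd_natCast_natCast]
  exact hgcd

lemma not_single (a d w r : ℕ) (hgcd : Nat.gcd a d = 1) (hw0 : 0 < w) (hwa : w < a)
    (hr1 : 1 < r) (hr2 : r < w - 1) (n : ℤ) (hn : AMem a d w {r} n) :
    n ≠ (a:ℤ) + (r:ℤ) * d := by
  obtain ⟨z, hz0, hsum⟩ := hn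
  intro hbad
  have hd : 0 < d := dpos a d w hgcd hw0 hwa
  set L := ∑ i : Fin (w+1), z i with hL
  set M := ∑ i : Fin (w+1), (i:ℕ) * z i with hM
  have heq : (L:ℤ) * a + (M:ℤ) * d = (a:ℤ) + (r:ℤ) * d := by
    rw [← sum_fact a d w z, ← hsum, hbad]
  have hkey : ((L:ℤ) - 1) * a = ((r:ℤ) - M) * d := by linarith
  have hdvd : (a:ℤ) ∣ ((r:ℤ) - M) := by
    refine (coprime_int a d hgcd).dvd_of_dvd_mul_right ?_
    exact ⟨(L:ℤ) - 1, by linarith⟩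
  rcases lt_trichotomy ((r:ℤ) - M) 0 with h | h | h
  · have hL0 : (L:ℤ) - 1 < 0 := by
      by_contra hc
      push_neg at hc
      have : 0 ≤ ((L:ℤ) - 1) * a := mul_nonneg hc (by positivity)
      have : ((r:ℤ) - M) * d < 0 := by
        apply mul_neg_of_neg_of_pos h (by exact_mod_cast hd)
      linarith
    have hL0' : L = 0 := by omega
    have hsum0 : ∑ i : Fin (w+1), z i = 0 := by rw [← hL]; exact hL0'
    have hz := Finset.sum_eq_zero_iff.mp hsum0
    have hM0 : M = 0 := by
      rw [hM]
      exact Finset.sum_eq_zero fun i hi => by rw [hz i hi, Nat.mul_zero]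
    have : (0:ℤ) ≤ (r:ℤ) := by positivity
    rw [hM0] at h
    simp at h
    linarith
  · have hMr : (M:ℤ) = r := by linarith
    have hL1 : (L:ℤ) = 1 := by
      have ha : (0:ℤ) < a := by exact_mod_cast (by omega : 0 < a)
      have : ((L:ℤ) - 1) * a = 0 := by rw [hkey]; rw [← hMr]; ring
      rcases mul_eq_zero.mp this with h' | h'
      · linarith
      · linarith
    have hL1' : L = 1 := by exact_mod_cast hL1
    obtain ⟨j, -, hj⟩ := Finset.exists_ne_zero_of_sum_ne_zero
      (by rw [← hL, hL1']; exact one_ne_zero : ∑ i : Fin (w+1), z i ≠ 0)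
    have hsplit : z j + ∑ i ∈ Finset.univ.erase j, z i = L :=
      (Finset.add_sum_erase Finset.univ z (Finset.mem_univ j)).trans hL.symm
    have hzj : z j = 1 ∧ ∀ i ∈ Finset.univ.erase j, z i = 0 := by
      constructor
      · omega
      · intro i hi
        have h0 : ∑ i ∈ Finset.univ.erase j, z i = 0 := by omega
        exact (Finset.sum_eq_zero_iff.mp h0) i hi
    have hMj : M = (j:ℕ) := by
      rw [hM, ← Finset.add_sum_erase Finset.univ (fun i : Fin (w+1) => (i:ℕ) * z i)
        (Finset.mem_univ j)]
      rw [Finset.sum_eq_zero (fun i hi => by rw [hzj.2 i hi, Nat.mul_zero])]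
      rw [hzj.1]
      omega
    have hjr : (j:ℕ) = r := by
      have : (M:ℤ) = (r:ℤ) := hMr
      exact_mod_cast (hMj ▸ this)
    have := hz0 j (by simpa using hjr)
    rw [this] at hzj
    exact one_ne_zero hzj.1.symm
  · have hle : (a:ℤ) ≤ (r:ℤ) - M := Int.le_of_dvd h hdvd
    have : (r:ℤ) < a := by exact_mod_cast (by omega : r < a)
    have : (0:ℤ) ≤ M := by positivity
    linarith

lemma extract (a d w : ℕ) (hgcd : Nat.gcd a d = 1) (hw0 : 0 < w) (hwa : w < a)
    (c1 c2 : ℤ) (hc2 : 0 ≤ c2) (hc2a : c2 < (a:ℤ)) (L M : ℕ) (hMw : M ≤ L * w)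
    (heq : c1 * a + c2 * d = (L:ℤ) * a + (M:ℤ) * d) :
    ∃ k : ℤ, 0 ≤ k ∧ k ≤ (c1 * w - c2) / ((a:ℤ) + w * d) ∧
      (L:ℤ) = c1 - k * d ∧ (M:ℤ) = c2 + k * a := by
  have hd : 0 < d := dpos a d w hgcd hw0 hwa
  have hdz : ((d:ℤ)) ≠ 0 := by exact_mod_cast hd.ne'
  have ha : (0:ℤ) < a := by exact_mod_cast (by omega : 0 < a)
  have hkey : (c1 - L) * a = ((M:ℤ) - c2) * d := by linarith
  obtain ⟨k, hk⟩ : (d:ℤ) ∣ (c1 - L) := by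
    refine (coprime_int a d hgcd).symm.dvd_of_dvd_mul_right ?_
    exact ⟨(M:ℤ) - c2, by linarith⟩
  have hMk : (M:ℤ) = c2 + k * a := by
    have h1 : (k * a) * d = ((M:ℤ) - c2) * d := by
      rw [← hkey, hk]; ring
    have := mul_right_cancel₀ hdz h1
    linarith
  have hLk : (L:ℤ) = c1 - k * d := by linarith
  have hk0 : 0 ≤ k := by
    by_contra hc
    push_neg at hc
    have hk1 : k ≤ -1 := by omega
    have : k * a ≤ -1 * a := mul_le_mul_of_nonneg_right hk1 ha.le
    have hM0 : (0:ℤ) ≤ M := by positivity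
    linarith
  have hpos : (0:ℤ) < (a:ℤ) + w * d := by
    have : (0:ℤ) ≤ (w:ℤ) * d := by positivity
    linarith
  refine ⟨k, hk0, ?_, hLk, hMk⟩
  rw [Int.le_ediv_iff_mul_le hpos]
  have hMLw : (M:ℤ) ≤ (L:ℤ) * w := by exact_mod_cast hMw
  calc k * ((a:ℤ) + w * d) = ((c2 + k * a) - c2) + (c1 - (c1 - k * d)) * w := by ring
    _ = ((M:ℤ) - c2) + (c1 - L) * w := by rw [← hMk, ← hLk]
    _ ≤ c1 * w - c2 := by linarith

end Aux

theorem stmt13 (a d w r : ℕ) (hgcd : Nat.gcd a d = 1) (hw0 : 0 < w) (hwa : w < a)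
    (hr1 : 1 < r) (hr2 : r < w - 1)
    (c1 c2 : ℤ) (hc2 : 0 ≤ c2) (hc2a : c2 < (a : ℤ))
    (hn : AMem a d w {r} (c1 * a + c2 * d)) :
    ALen a d w {r} (c1 * a + c2 * d) = ALen a d w ∅ (c1 * a + c2 * d) ∧
      ALen a d w ∅ (c1 * a + c2 * d)
        = {ℓ : ℤ | ∃ k : ℤ, 0 ≤ k ∧ k ≤ (c1 * w - c2) / ((a : ℤ) + w * d) ∧
            ℓ = c1 - k * d} := by
  have hne : (c1 * a + c2 * d : ℤ) ≠ (a:ℤ) + (r:ℤ) * d :=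
    not_single a d w r hgcd hw0 hwa hr1 hr2 _ hn
  have hd : 0 < d := dpos a d w hgcd hw0 hwa
  have hdz : ((d:ℤ)) ≠ 0 := by exact_mod_cast hd.ne'
  have ha : (0:ℤ) < a := by exact_mod_cast (by omega : 0 < a)
  have hwz : (0:ℤ) < w := by exact_mod_cast hw0
  have hpos : (0:ℤ) < (a:ℤ) + w * d := by
    have : (0:ℤ) ≤ (w:ℤ) * d := by positivity
    linarith
  constructor
  · ext ℓ
    simp only [ALen, Set.mem_setOf_eq]
    constructor
    · rintro ⟨z, hz0, hsum, hlen⟩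
      exact ⟨z, by simp, hsum, hlen⟩
    · rintro ⟨z, -, hsum, hlen⟩
      set L := ∑ i : Fin (w+1), z i with hL
      set M := ∑ i : Fin (w+1), (i:ℕ) * z i with hM
      have hMw : M ≤ L * w := sum_le_w w z
      have hnlm : ¬(L = 1 ∧ M = r) := by
        rintro ⟨h1, h2⟩
        apply hne
        rw [hsum, sum_fact a d w z, ← hL, ← hM, h1, h2]
        push_cast
        ring
      obtain ⟨z', hz'0, hz'L, hz'M⟩ := construct w r L M hw0 hr1 hr2 hMw hnlm
      refine ⟨z', fun i hi => hz'0 i (by simpa using hi), ?_, ?_⟩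
      · rw [hsum, sum_fact a d w z, sum_fact a d w z', hz'L, hz'M, ← hL, ← hM]
      · rw [← hlen]
        have e1 : (∑ i : Fin (w+1), (z' i : ℤ)) = ((∑ i : Fin (w+1), z' i : ℕ) : ℤ) := by
          push_cast; rfl
        have e2 : (∑ i : Fin (w+1), (z i : ℤ)) = ((L : ℕ) : ℤ) := by
          rw [hL]; push_cast; rfl
        rw [e1, e2, hz'L]
  · ext ℓ
    simp only [ALen, Set.mem_setOf_eq]
    constructor
    · rintro ⟨z, -, hsum, hlen⟩
      set L := ∑ i : Fin (w+1), z i with hL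
      set M := ∑ i : Fin (w+1), (i:ℕ) * z i with hM
      have hMw : M ≤ L * w := sum_le_w w z
      have heq : c1 * a + c2 * d = (L:ℤ) * a + (M:ℤ) * d := by
        rw [hsum, sum_fact a d w z, ← hL, ← hM]
      obtain ⟨k, hk0, hkle, hLk, -⟩ :=
        extract a d w hgcd hw0 hwa c1 c2 hc2 hc2a L M hMw heq
      refine ⟨k, hk0, hkle, ?_⟩
      rw [← hlen]
      have e2 : (∑ i : Fin (w+1), (z i : ℤ)) = ((L : ℕ) : ℤ) := by
        rw [hL]; push_cast; rfl
      rw [e2, hLk]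
    · rintro ⟨k, hk0, hkle, hl⟩
      have hkmul : k * ((a:ℤ) + w * d) ≤ c1 * w - c2 :=
        (Int.le_ediv_iff_mul_le hpos).mp hkle
      have hm0 : (0:ℤ) ≤ c2 + k * a := add_nonneg hc2 (mul_nonneg hk0 ha.le)
      have hmlw : c2 + k * a ≤ (c1 - k * d) * w := by nlinarith [hkmul]
      have hl0 : (0:ℤ) ≤ c1 - k * d := by
        by_contra h
        push_neg at h
        have : (c1 - k * d) * w < 0 := mul_neg_of_neg_of_pos h hwz
        linarith
      set L := (c1 - k * d).toNat with hLdef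
      set M := (c2 + k * a).toNat with hMdef
      have hLc : (L:ℤ) = c1 - k * d := Int.toNat_of_nonneg hl0
      have hMc : (M:ℤ) = c2 + k * a := Int.toNat_of_nonneg hm0
      have hMw : M ≤ L * w := by
        have : (M:ℤ) ≤ (L:ℤ) * w := by rw [hLc, hMc]; exact hmlw
        exact_mod_cast this
      have hnlm : ¬(L = 1 ∧ M = r) := by
        rintro ⟨h1, h2⟩
        apply hne
        have e1 : c1 - k * d = (1:ℤ) := by rw [← hLc, h1]; norm_num
        have e2 : c2 + k * a = (r:ℤ) := by rw [← hMc, h2]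
        calc c1 * (a:ℤ) + c2 * d = (c1 - k * d) * a + (c2 + k * a) * d := by ring
          _ = (a:ℤ) + (r:ℤ) * d := by rw [e1, e2]; ring
      obtain ⟨z, hz0, hzL, hzM⟩ := construct w r L M hw0 hr1 hr2 hMw hnlm
      refine ⟨z, by simp, ?_, ?_⟩
      · rw [sum_fact a d w z, hzL, hzM, hLc, hMc]
        ring
      · have e1 : (∑ i : Fin (w+1), (z i : ℤ)) = ((∑ i : Fin (w+1), z i : ℕ) : ℤ) := by
          push_cast; rfl
        rw [e1, hzL, hLc, hl]
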